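/- Let r ≥ 1 and let α, α', β, β', γ, γ' : Fin (r+1) → ℕ be exit-density sequences with common weights ω = Σ_ℓ α_ℓ = Σ_ℓ β_ℓ = Σ_ℓ γ_ℓ and ω' = Σ_ℓ α'_ℓ = Σ_ℓ β'_ℓ = Σ_ℓ γ'_ℓ, and suppose Σ_{ℓ=0}^{r} ℓ(α'_ℓ + β'_ℓ + γ'_ℓ) = rω'. Define i_ℓ = ℓ + Σ_{j<ℓ} α_j, j_ℓ = ℓ + Σ_{j<ℓ} β_j, k_ℓ = ℓ + Σ_{j<ℓ} γ_j for 1 ≤ ℓ ≤ r, and n = r + ω. Then Σ_{ℓ=1}^{r} (α'_ℓ i_ℓ + β'_ℓ j_ℓ + γ'_ℓ k_ℓ) − ω' n = Σ_{ℓ<ℓ'} (α_ℓ α'_{ℓ'} + β_ℓ β'_{ℓ'} + γ_ℓ γ'_{ℓ'}) − ω ω'. -/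

import Mathlib

open Finset

theorem sum_Icc_mul_natCast_add_sum_range {R : Type*} [CommRing R] (r : ℕ) (a a' : ℕ → R) :
    ∑ ℓ ∈ Icc 1 r, a' ℓ * ((ℓ : R) + ∑ j ∈ range ℓ, a j)
      = ∑ ℓ ∈ range (r + 1), (ℓ : R) * a' ℓ
        + ∑ ℓ' ∈ range (r + 1), ∑ ℓ ∈ range ℓ', a ℓ * a' ℓ' := by
  rw [← sum_add_distrib, range_eq_Ico, sum_eq_sum_Ico_succ_bot (Nat.succ_pos r)]
  simp only [Nat.cast_zero, range_zero, sum_empty, zero_mul, zero_add, ← sum_mul,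
    Nat.succ_eq_add_one, Ico_add_one_right_eq_Icc]
  exact sum_congr rfl fun ℓ _ => by ring

theorem stmt3_general (r ω ω' : ℕ) (α β γ α' β' γ' : ℕ → ℕ)
    (htrace : ∑ ℓ ∈ range (r+1), ℓ * (α' ℓ + β' ℓ + γ' ℓ) = r * ω') :
    (∑ ℓ ∈ Finset.Icc 1 r,
        ((α' ℓ : ℤ) * ((ℓ : ℤ) + ∑ j ∈ range ℓ, (α j : ℤ))
       + (β' ℓ : ℤ) * ((ℓ : ℤ) + ∑ j ∈ range ℓ, (β j : ℤ))
       + (γ' ℓ : ℤ) * ((ℓ : ℤ) + ∑ j ∈ range ℓ, (γ j : ℤ))))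
      - (ω' : ℤ) * ((r : ℤ) + ω)
    = (∑ ℓ' ∈ range (r+1), ∑ ℓ ∈ range ℓ',
        ((α ℓ : ℤ) * (α' ℓ' : ℤ) + (β ℓ : ℤ) * (β' ℓ' : ℤ) + (γ ℓ : ℤ) * (γ' ℓ' : ℤ)))
      - (ω : ℤ) * (ω' : ℤ) := by
  have htrace' : ∑ ℓ ∈ range (r + 1), ((ℓ : ℤ) * α' ℓ + ℓ * β' ℓ + ℓ * γ' ℓ) = r * ω' := by
    exact_mod_cast (by simpa only [mul_add] using htrace)
  simp only [sum_add_distrib, sum_Icc_mul_natCast_add_sum_range] at htrace' ⊢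
  linear_combination htrace'

/-- Formula (2.3) of the paper: rewriting `Σ_{m'}(m)` in terms of exit densities only. -/
theorem stmt3 (r ω ω' : ℕ) (hr : 1 ≤ r) (α β γ α' β' γ' : ℕ → ℕ)
    (hα : ∑ ℓ ∈ range (r+1), α ℓ = ω)
    (hβ : ∑ ℓ ∈ range (r+1), β ℓ = ω)
    (hγ : ∑ ℓ ∈ range (r+1), γ ℓ = ω)
    (hα' : ∑ ℓ ∈ range (r+1), α' ℓ = ω')
    (hβ' : ∑ ℓ ∈ range (r+1), β' ℓ = ω')
    (hγ' : ∑ ℓ ∈ range (r+1), γ' ℓ = ω')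
    (htrace : ∑ ℓ ∈ range (r+1), ℓ * (α' ℓ + β' ℓ + γ' ℓ) = r * ω') :
    (∑ ℓ ∈ Finset.Icc 1 r,
        ((α' ℓ : ℤ) * ((ℓ : ℤ) + ∑ j ∈ range ℓ, (α j : ℤ))
       + (β' ℓ : ℤ) * ((ℓ : ℤ) + ∑ j ∈ range ℓ, (β j : ℤ))
       + (γ' ℓ : ℤ) * ((ℓ : ℤ) + ∑ j ∈ range ℓ, (γ j : ℤ))))
      - (ω' : ℤ) * ((r : ℤ) + ω)
    = (∑ ℓ' ∈ range (r+1), ∑ ℓ ∈ range ℓ',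
        ((α ℓ : ℤ) * (α' ℓ' : ℤ) + (β ℓ : ℤ) * (β' ℓ' : ℤ) + (γ ℓ : ℤ) * (γ' ℓ' : ℤ)))
      - (ω : ℤ) * (ω' : ℤ) :=
  stmt3_general r ω ω' α β γ α' β' γ' htrace
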